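/- Assume each T̃_h (h = 1,…,H) is additive. Then f₁(x₁, π₁(x₁)) − Q₁(x₁, π₁(x₁)) = Σ_{h=1}^H Roll_{T̃}(h, δ_h), where δ_h : X × A → ℝ is defined by δ_h(x,a) := R̃_h(x,a) − R_h(x,a) + T̃_h[V_{h+1}](x,a) − T_h[V_{h+1}](x,a). -/
import Mathlib


open scoped BigOperators

namespace SimulationLemmaPseudobackup

variable {X A : Type*}

/-- `rollSeq S π δ h k` is `u_{h-k}` for the downward recursion
`u_h = δ`, `u_i = S_i[x ↦ u_{i+1}(x, π_{i+1}(x))]`. -/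
noncomputable def rollSeq (S : ℕ → (X → ℝ) → X × A → ℝ) (π : ℕ → X → A)
    (δ : X × A → ℝ) (h : ℕ) : ℕ → X × A → ℝ
  | 0 => δ
  | (k + 1) => fun p =>
      S (h - (k + 1)) (fun x => rollSeq S π δ h k (x, π (h - k) x)) p

/-- The rolled-out value `Roll_S(h, δ) = u_1(x₁, π_1(x₁))` where `u_h = δ` and
`u_i = S_i[x ↦ u_{i+1}(x, π_{i+1}(x))]` for `i = h−1, …, 1`. -/
noncomputable def Roll (S : ℕ → (X → ℝ) → X × A → ℝ) (π : ℕ → X → A)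
    (x1 : X) (h : ℕ) (δ : X × A → ℝ) : ℝ :=
  rollSeq S π δ h (h - 1) (x1, π 1 x1)

lemma rollSeq_shift (S : ℕ → (X → ℝ) → X × A → ℝ) (π : ℕ → X → A)
    (δ : X × A → ℝ) (h : ℕ) :
    ∀ k, rollSeq S π δ (h + 1) (k + 1)
      = rollSeq S π (fun p => S h (fun x => δ (x, π (h + 1) x)) p) h k
  | 0 => by
      funext p
      simp [rollSeq]
  | (k + 1) => by
      funext p
      show S (h + 1 - (k + 1 + 1))
          (fun x => rollSeq S π δ (h + 1) (k + 1) (x, π (h + 1 - (k + 1)) x)) p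
        = S (h - (k + 1))
          (fun x => rollSeq S π (fun p => S h (fun x => δ (x, π (h + 1) x)) p) h k
            (x, π (h - k) x)) p
      have e1 : h + 1 - (k + 1 + 1) = h - (k + 1) := by omega
      have e2 : h + 1 - (k + 1) = h - k := by omega
      rw [e1, e2, rollSeq_shift S π δ h k]

lemma Roll_succ (S : ℕ → (X → ℝ) → X × A → ℝ) (π : ℕ → X → A) (x1 : X)
    (h : ℕ) (hh : 1 ≤ h) (δ : X × A → ℝ) :
    Roll S π x1 (h + 1) δ
      = Roll S π x1 h (fun p => S h (fun x => δ (x, π (h + 1) x)) p) := by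
  unfold Roll
  obtain ⟨m, rfl⟩ : ∃ m, h = m + 1 := ⟨h - 1, by omega⟩
  have e : m + 1 + 1 - 1 = (m + 1 - 1) + 1 := by omega
  rw [e, rollSeq_shift]

lemma rollSeq_add (S : ℕ → (X → ℝ) → X × A → ℝ) (π : ℕ → X → A) (h : ℕ)
    (hadd : ∀ i, 1 ≤ i → i ≤ h - 1 → ∀ u v : X → ℝ, S i (u + v) = S i u + S i v)
    (u v : X × A → ℝ) :
    ∀ k, k ≤ h - 1 →
      rollSeq S π (fun p => u p + v p) h k
        = fun p => rollSeq S π u h k p + rollSeq S π v h k p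
  | 0, _ => rfl
  | (k + 1), hk => by
      funext p
      simp only [rollSeq]
      have h1 : 1 ≤ h - (k + 1) := by omega
      have h2 : h - (k + 1) ≤ h - 1 := by omega
      have ih := rollSeq_add S π h hadd u v k (by omega)
      have : (fun x => rollSeq S π (fun p => u p + v p) h k (x, π (h - k) x))
          = (fun x => rollSeq S π u h k (x, π (h - k) x))
            + (fun x => rollSeq S π v h k (x, π (h - k) x)) := by
        funext x; rw [ih]; rfl
      rw [this, hadd _ h1 h2]
      rfl

lemma Roll_add (S : ℕ → (X → ℝ) → X × A → ℝ) (π : ℕ → X → A) (x1 : X) (h : ℕ)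
    (hadd : ∀ i, 1 ≤ i → i ≤ h - 1 → ∀ u v : X → ℝ, S i (u + v) = S i u + S i v)
    (u v : X × A → ℝ) :
    Roll S π x1 h (fun p => u p + v p) = Roll S π x1 h u + Roll S π x1 h v := by
  unfold Roll
  rw [rollSeq_add S π h hadd u v (h - 1) le_rfl]

lemma rollSeq_zero (S : ℕ → (X → ℝ) → X × A → ℝ) (π : ℕ → X → A) (h : ℕ)
    (hadd : ∀ i, 1 ≤ i → i ≤ h - 1 → ∀ u v : X → ℝ, S i (u + v) = S i u + S i v)
    (δ : X × A → ℝ) (hδ : ∀ p, δ p = 0) :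
    ∀ k, k ≤ h - 1 → ∀ p, rollSeq S π δ h k p = 0
  | 0, _, p => hδ p
  | (k + 1), hk, p => by
      simp only [rollSeq]
      have h1 : 1 ≤ h - (k + 1) := by omega
      have h2 : h - (k + 1) ≤ h - 1 := by omega
      have ih := rollSeq_zero S π h hadd δ hδ k (by omega)
      have hz : (fun x => rollSeq S π δ h k (x, π (h - k) x)) = (0 : X → ℝ) := by
        funext x; exact ih _
      rw [hz]
      have := hadd _ h1 h2 (0 : X → ℝ) (0 : X → ℝ)
      simp only [add_zero] at this
      have h0 : S (h - (k + 1)) (0 : X → ℝ)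
          = S (h - (k + 1)) (0 : X → ℝ) + S (h - (k + 1)) (0 : X → ℝ) := this
      have := congrFun h0 p
      simp only [Pi.add_apply] at this
      linarith

/-- Simulation lemma for (additive) linear pseudobackups: the value gap between
the estimated functions `f` (defined via the pseudobackups `T̃` and rewards
`R̃`) and the true `Q^π` (defined via the Bellman backups `T` and rewards `R`)
telescopes into rolled-out one-step errors measured on `V_{h+1}`. -/
theorem simulation_lemma_pseudobackup
    (H : ℕ) (hH : 0 < H) (x1 : X)
    (Tt T : ℕ → (X → ℝ) → X × A → ℝ)
    (Rt R : ℕ → X × A → ℝ)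
    (π : ℕ → X → A)
    (f Q : ℕ → X × A → ℝ)
    (hfH : f (H + 1) = 0) (hQH : Q (H + 1) = 0)
    (hf : ∀ h, 1 ≤ h → h ≤ H →
      f h = fun p => Rt h p + Tt h (fun x => f (h + 1) (x, π (h + 1) x)) p)
    (hQ : ∀ h, 1 ≤ h → h ≤ H →
      Q h = fun p => R h p + T h (fun x => Q (h + 1) (x, π (h + 1) x)) p)
    (hadd : ∀ h, 1 ≤ h → h ≤ H → ∀ u v : X → ℝ, Tt h (u + v) = Tt h u + Tt h v) :
    f 1 (x1, π 1 x1) - Q 1 (x1, π 1 x1)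
      = ∑ h ∈ Finset.Icc 1 H,
          Roll Tt π x1 h
            (fun p => Rt h p - R h p
              + Tt h (fun x => Q (h + 1) (x, π (h + 1) x)) p
              - T h (fun x => Q (h + 1) (x, π (h + 1) x)) p) := by
  set δ : ℕ → X × A → ℝ := fun h p =>
      Rt h p - R h p
        + Tt h (fun x => Q (h + 1) (x, π (h + 1) x)) p
        - T h (fun x => Q (h + 1) (x, π (h + 1) x)) p with hδ
  set g : ℕ → X × A → ℝ := fun h p => f h p - Q h p with hg
  -- key step identity: g n = δ n + Tt n (g (n+1) ∘ π)
  have key : ∀ n, 1 ≤ n → n ≤ H → ∀ p,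
      g n p = δ n p + Tt n (fun x => g (n + 1) (x, π (n + 1) x)) p := by
    intro n h1 h2 p
    have hsplit : (fun x => f (n + 1) (x, π (n + 1) x))
        = (fun x => Q (n + 1) (x, π (n + 1) x))
          + (fun x => g (n + 1) (x, π (n + 1) x)) := by
      funext x; simp [hg]
    have := hadd n h1 h2 (fun x => Q (n + 1) (x, π (n + 1) x))
        (fun x => g (n + 1) (x, π (n + 1) x))
    simp only [hg, hδ, hf n h1 h2, hQ n h1 h2]
    rw [hsplit, this]
    simp [Pi.add_apply]
    ring
  -- telescoping induction
  have main : ∀ n, 1 ≤ n → n ≤ H + 1 →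
      g 1 (x1, π 1 x1)
        = (∑ h ∈ Finset.Icc 1 (n - 1), Roll Tt π x1 h (δ h))
          + Roll Tt π x1 n (g n) := by
    intro n h1
    induction n, h1 using Nat.le_induction with
    | base =>
        intro _
        simp [Roll, rollSeq]
    | succ n hn ih =>
        intro hle
        have hnH : n ≤ H := by omega
        rw [ih (by omega)]
        have haddn : ∀ i, 1 ≤ i → i ≤ n - 1 →
            ∀ u v : X → ℝ, Tt i (u + v) = Tt i u + Tt i v := by
          intro i hi1 hi2
          exact hadd i hi1 (by omega)
        have hgn : g n = fun p =>
            δ n p + Tt n (fun x => g (n + 1) (x, π (n + 1) x)) p := by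
          funext p; exact key n hn hnH p
        have hRoll : Roll Tt π x1 n (g n)
            = Roll Tt π x1 n (δ n) + Roll Tt π x1 (n + 1) (g (n + 1)) := by
          calc Roll Tt π x1 n (g n)
              = Roll Tt π x1 n (fun p =>
                  δ n p + Tt n (fun x => g (n + 1) (x, π (n + 1) x)) p) := by
                rw [← hgn]
            _ = Roll Tt π x1 n (δ n)
                + Roll Tt π x1 n (fun p =>
                    Tt n (fun x => g (n + 1) (x, π (n + 1) x)) p) :=
                Roll_add Tt π x1 n haddn _ _
            _ = Roll Tt π x1 n (δ n) + Roll Tt π x1 (n + 1) (g (n + 1)) := by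
                rw [Roll_succ Tt π x1 n hn (g (n + 1))]
        have hsum : (∑ h ∈ Finset.Icc 1 (n + 1 - 1), Roll Tt π x1 h (δ h))
            = (∑ h ∈ Finset.Icc 1 (n - 1), Roll Tt π x1 h (δ h))
              + Roll Tt π x1 n (δ n) := by
          have e1 : n + 1 - 1 = (n - 1) + 1 := by omega
          rw [e1, Finset.sum_Icc_succ_top (by omega : 1 ≤ (n - 1) + 1)]
          have e2 : (n - 1) + 1 = n := by omega
          rw [e2]
        rw [hRoll, hsum]
        ring
  have hfin := main (H + 1) (by omega) le_rfl
  have hzero : Roll Tt π x1 (H + 1) (g (H + 1)) = 0 := by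
    unfold Roll
    apply rollSeq_zero Tt π (H + 1)
      (fun i hi1 hi2 => hadd i hi1 (by omega)) _ _ _ le_rfl
    intro p
    simp [hg, hfH, hQH]
  have : g 1 (x1, π 1 x1) = f 1 (x1, π 1 x1) - Q 1 (x1, π 1 x1) := rfl
  rw [← this, hfin, hzero, add_zero]
  simp [hδ]

end SimulationLemmaPseudobackup
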